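/- arXiv:2605.04630 — 4 statements merged into one kernel-verified Lean document; each statement's English description precedes it below -/
import Mathlib

section
/- Let m and n be odd natural numbers and let a, b ∈ B_{m,n} be Brauer partitions. (i) If for all Finsets X of Fin m and Y of Fin n with X.card odd and Y.card odd, (X,Y) is a union of a-blocks if and only if (X,Y) is a union of b-blocks, then a = b. (ii) Likewise, if for all Finsets X of Fin m and Y of Fin n with X.card even and Y.card even, (X,Y) is a union of a-blocks if and only if (X,Y) is a union of b-blocks, then a = b. (These are the faithfulness of the two reduced representations ā¹ and ā⁰ of the odd-degree Brauer category, of dimensions 2^{n-1}.) -/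
open Classical

/-- A partition in `P_{m,n}`: an equivalence relation on `Fin m ⊕ Fin n`. -/
abbrev Ptn (m n : ℕ) := Setoid (Fin m ⊕ Fin n)

/-- `(X,Y)` is a union of `a`-blocks. -/
def IsUnionOfBlocks {m n : ℕ} (a : Ptn m n) (X : Finset (Fin m)) (Y : Finset (Fin n)) :
    Prop :=
  ∀ u v, a.r u v →
    (u ∈ Sum.inl '' (X : Set (Fin m)) ∪ Sum.inr '' (Y : Set (Fin n)) ↔
     v ∈ Sum.inl '' (X : Set (Fin m)) ∪ Sum.inr '' (Y : Set (Fin n)))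

/-- The zero-one matrix `ā` associated to a partition `a`. -/
noncomputable def ptnMatrix (K : Type) [Semiring K] {m n : ℕ} (a : Ptn m n) :
    Matrix (Finset (Fin m)) (Finset (Fin n)) K :=
  Matrix.of fun X Y => if IsUnionOfBlocks a X Y then (1 : K) else 0

/-- The involution `a*` of a partition. -/
def ptnStar {m n : ℕ} (a : Ptn m n) : Ptn n m :=
  Setoid.comap Sum.swap a

/-- First projection used to define the tensor sum. -/
def tensorProj₁ {m n s t : ℕ} :
    (Fin m ⊕ Fin s) ⊕ (Fin n ⊕ Fin t) → Option (Fin m ⊕ Fin n)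
  | Sum.inl (Sum.inl i) => some (Sum.inl i)
  | Sum.inl (Sum.inr _) => none
  | Sum.inr (Sum.inl j) => some (Sum.inr j)
  | Sum.inr (Sum.inr _) => none

/-- Second projection used to define the tensor sum. -/
def tensorProj₂ {m n s t : ℕ} :
    (Fin m ⊕ Fin s) ⊕ (Fin n ⊕ Fin t) → Option (Fin s ⊕ Fin t)
  | Sum.inl (Sum.inl _) => none
  | Sum.inl (Sum.inr i) => some (Sum.inl i)
  | Sum.inr (Sum.inl _) => none
  | Sum.inr (Sum.inr j) => some (Sum.inr j)

/-- The tensor sum `a ⊞ b` of partitions. -/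
def ptnTensor {m n s t : ℕ} (a : Ptn m n) (b : Ptn s t) : Ptn (m + s) (n + t) :=
  Setoid.comap (Sum.map finSumFinEquiv.symm finSumFinEquiv.symm)
    (Relation.EqvGen.setoid fun u v =>
      (∃ p q, tensorProj₁ u = some p ∧ tensorProj₁ v = some q ∧ a.r p q) ∨
      (∃ p q, tensorProj₂ u = some p ∧ tensorProj₂ v = some q ∧ b.r p q))

/-- The generating relation of the product graph `Π(a,b)`. -/
def prodGen {m n t : ℕ} (a : Ptn m n) (b : Ptn n t) :
    (Fin m ⊕ Fin n ⊕ Fin t) → (Fin m ⊕ Fin n ⊕ Fin t) → Prop :=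
  fun u v =>
    (∃ p q, a.r p q ∧ u = Sum.map id Sum.inl p ∧ v = Sum.map id Sum.inl q) ∨
    (∃ p q, b.r p q ∧ u = Sum.inr p ∧ v = Sum.inr q)

/-- The equivalence `∼` on `Fin m ⊕ Fin n ⊕ Fin t` generated by `a` and `b`. -/
def prodSetoid {m n t : ℕ} (a : Ptn m n) (b : Ptn n t) :
    Setoid (Fin m ⊕ Fin n ⊕ Fin t) :=
  Relation.EqvGen.setoid (prodGen a b)

/-- The product `ab` of composable partitions. -/
def ptnMul {m n t : ℕ} (a : Ptn m n) (b : Ptn n t) : Ptn m t :=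
  Setoid.comap (Sum.map id Sum.inr) (prodSetoid a b)

/-- The twisting number `Φ(a,b)`: the number of `∼`-classes contained in the middle copy. -/
noncomputable def Phi {m n t : ℕ} (a : Ptn m n) (b : Ptn n t) : ℕ :=
  Nat.card {C : Quotient (prodSetoid a b) //
    ∀ u, Quotient.mk (prodSetoid a b) u = C → ∃ j : Fin n, u = Sum.inr (Sum.inl j)}

/-- The identity partition `ι_n`. -/
def idPtn (n : ℕ) : Ptn n n :=
  Relation.EqvGen.setoid fun u v => ∃ i : Fin n, u = Sum.inl i ∧ v = Sum.inr i

/-- `X` is a union of `ker(a)`-classes. -/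
def KerClosed {m n : ℕ} (a : Ptn m n) (X : Finset (Fin m)) : Prop :=
  ∀ x ∈ X, ∀ i : Fin m, a.r (Sum.inl x) (Sum.inl i) → i ∈ X

/-- `Y` is a union of `coker(a)`-classes. -/
def CokerClosed {m n : ℕ} (a : Ptn m n) (Y : Finset (Fin n)) : Prop :=
  ∀ y ∈ Y, ∀ j : Fin n, a.r (Sum.inr y) (Sum.inr j) → j ∈ Y

/-- The image `Xa` of `X` under `a`. -/
noncomputable def ptnImage {m n : ℕ} (a : Ptn m n) (X : Finset (Fin m)) :
    Finset (Fin n) :=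
  Finset.univ.filter fun j => ∃ x ∈ X, a.r (Sum.inl x) (Sum.inr j)

/-- The preimage `aY` of `Y` under `a`. -/
noncomputable def ptnPreimage {m n : ℕ} (a : Ptn m n) (Y : Finset (Fin n)) :
    Finset (Fin m) :=
  Finset.univ.filter fun i => ∃ y ∈ Y, a.r (Sum.inl i) (Sum.inr y)

/-- `Z` is an intertwining set for `(a,b)` with respect to `(X,Y)`. -/
def Intertwining {m n t : ℕ} (a : Ptn m n) (b : Ptn n t)
    (X : Finset (Fin m)) (Y : Finset (Fin t)) (Z : Finset (Fin n)) : Prop :=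
  IsUnionOfBlocks a X Z ∧ IsUnionOfBlocks b Z Y

/-- A Brauer partition: every block has exactly two elements. -/
def IsBrauer {m n : ℕ} (a : Ptn m n) : Prop :=
  ∀ u : Fin m ⊕ Fin n, Nat.card {v // a.r u v} = 2

/-- The clockwise boundary order on the vertices of a diagram. -/
def beta (m n : ℕ) : Fin m ⊕ Fin n → ℕ
  | Sum.inl i => (i : ℕ)
  | Sum.inr j => m + n - 1 - (j : ℕ)

/-- A Temperley–Lieb partition: a planar (non-crossing) Brauer partition. -/
def IsTL {m n : ℕ} (a : Ptn m n) : Prop :=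
  IsBrauer a ∧
    ¬ ∃ u v p q : Fin m ⊕ Fin n, a.r u v ∧ a.r p q ∧
        beta m n u < beta m n p ∧ beta m n p < beta m n v ∧ beta m n v < beta m n q

/-- The domain of a partition: upper vertices lying in transversal blocks. -/
noncomputable def ptnDom {m n : ℕ} (a : Ptn m n) : Finset (Fin m) :=
  Finset.univ.filter fun i => ∃ j : Fin n, a.r (Sum.inl i) (Sum.inr j)

/-- The codomain of a partition: lower vertices lying in transversal blocks. -/
noncomputable def ptnCodom {m n : ℕ} (a : Ptn m n) : Finset (Fin n) :=
  Finset.univ.filter fun j => ∃ i : Fin m, a.r (Sum.inl i) (Sum.inr j)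

/-- The rank of a partition: the number of transversal blocks. -/
noncomputable def ptnRank {m n : ℕ} (a : Ptn m n) : ℕ :=
  Nat.card {C : Quotient a // ∃ (i : Fin m) (j : Fin n),
    Quotient.mk a (Sum.inl i) = C ∧ Quotient.mk a (Sum.inr j) = C}

/-- An even-gap subset of `Fin n`. -/
def IsEvenGap {n : ℕ} (X : Finset (Fin n)) : Prop :=
  X.card ≡ n [MOD 2] ∧
    ∀ (k : ℕ) (h : k < (X.sort (· ≤ ·)).length),
      (((X.sort (· ≤ ·)).get ⟨k, h⟩ : ℕ) + 1) ≡ (k + 1) [MOD 2]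

/-- The reduced (even-gap) matrix of a partition. -/
noncomputable def tlMatrix (K : Type) [Semiring K] {m n : ℕ} (a : Ptn m n) :
    Matrix {X : Finset (Fin m) // IsEvenGap X} {Y : Finset (Fin n) // IsEvenGap Y} K :=
  Matrix.of fun X Y => if IsUnionOfBlocks a X.1 Y.1 then (1 : K) else 0

/-- The standard basis vector `e_X` of `V_n`. -/
def eVec (K : Type) [Semiring K] {n : ℕ} (X : Finset (Fin n)) :
    Finset (Fin n) → K :=
  Pi.single X 1

/-- The subspace `V_n⁺`. -/
def Vplus (K : Type) [Field K] (n : ℕ) : Submodule K (Finset (Fin n) → K) :=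
  Submodule.span K (Set.range fun X : Finset (Fin n) => eVec K X + eVec K Xᶜ)

/-- The subspace `V_n⁻`. -/
def Vminus (K : Type) [Field K] (n : ℕ) : Submodule K (Finset (Fin n) → K) :=
  Submodule.span K (Set.range fun X : Finset (Fin n) => eVec K X - eVec K Xᶜ)

lemma mem_compl_union {m n : ℕ} (X : Finset (Fin m)) (Y : Finset (Fin n)) (u : Fin m ⊕ Fin n) :
    u ∈ Sum.inl '' ((Xᶜ : Finset (Fin m)) : Set (Fin m)) ∪
        Sum.inr '' ((Yᶜ : Finset (Fin n)) : Set (Fin n)) ↔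
    u ∉ (Sum.inl '' (X : Set (Fin m)) ∪ Sum.inr '' (Y : Set (Fin n))) := by
  cases u <;> simp

lemma unionOfBlocks_compl {m n : ℕ} {a : Ptn m n} {X : Finset (Fin m)} {Y : Finset (Fin n)} :
    IsUnionOfBlocks a Xᶜ Yᶜ ↔ IsUnionOfBlocks a X Y := by
  unfold IsUnionOfBlocks
  simp only [mem_compl_union]
  exact ⟨fun h u v r => not_iff_not.mp (h u v r), fun h u v r => not_iff_not.mpr (h u v r)⟩

lemma exists_partner {m n : ℕ} {a : Ptn m n} (ha : IsBrauer a) (u : Fin m ⊕ Fin n) :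
    ∃ v, a.r u v ∧ v ≠ u := by
  have h := ha u
  rw [Nat.card_eq_two_iff' (⟨u, a.refl u⟩ : {v // a.r u v})] at h
  obtain ⟨⟨v, hv⟩, hne, _⟩ := h
  exact ⟨v, hv, fun h => hne (by simp [h])⟩

lemma partner_unique {m n : ℕ} {a : Ptn m n} (ha : IsBrauer a) {u v z : Fin m ⊕ Fin n}
    (hv : a.r u v) (hvu : v ≠ u) (hz : a.r u z) (hzu : z ≠ u) : z = v := by
  have h := ha u
  rw [Nat.card_eq_two_iff' (⟨u, a.refl u⟩ : {v // a.r u v})] at h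
  obtain ⟨y, _, huniq⟩ := h
  have h1 := huniq ⟨v, hv⟩ (by simp [Subtype.ext_iff, hvu])
  have h2 := huniq ⟨z, hz⟩ (by simp [Subtype.ext_iff, hzu])
  have := h2.trans h1.symm
  exact Subtype.ext_iff.mp this

lemma pair_iff {m n : ℕ} {a : Ptn m n} (ha : IsBrauer a) {u v : Fin m ⊕ Fin n} (huv : u ≠ v)
    {X : Finset (Fin m)} {Y : Finset (Fin n)}
    (hS : ∀ w, w ∈ Sum.inl '' (X : Set (Fin m)) ∪ Sum.inr '' (Y : Set (Fin n)) ↔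
      w = u ∨ w = v) :
    IsUnionOfBlocks a X Y ↔ a.r u v := by
  constructor
  · intro h
    obtain ⟨u', hu', hne⟩ := exists_partner ha u
    have hm := (h u u' hu').mp ((hS u).mpr (Or.inl rfl))
    rcases (hS u').mp hm with h1 | h1
    · exact absurd h1 hne
    · exact h1 ▸ hu'
  · intro hr
    have key : ∀ w z, a.r w z → (w = u ∨ w = v) → (z = u ∨ z = v) := by
      rintro w z hwz (rfl | rfl)
      · by_cases hz : z = w
        · exact Or.inl hz
        · exact Or.inr (partner_unique ha hr (Ne.symm huv) hwz hz)
      · by_cases hz : z = w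
        · exact Or.inr hz
        · exact Or.inl (partner_unique ha (a.symm hr) huv hwz hz)
    intro w z hwz
    rw [hS w, hS z]
    exact ⟨key w z hwz, key z w (a.symm hwz)⟩

lemma rel_iff_aux {m n : ℕ} {a b : Ptn m n} (ha : IsBrauer a) (hb : IsBrauer b)
    {u v : Fin m ⊕ Fin n} (huv : u ≠ v)
    {X : Finset (Fin m)} {Y : Finset (Fin n)}
    (hS : ∀ w, w ∈ Sum.inl '' (X : Set (Fin m)) ∪ Sum.inr '' (Y : Set (Fin n)) ↔
      w = u ∨ w = v)
    (hiff : IsUnionOfBlocks a X Y ↔ IsUnionOfBlocks b X Y) :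
    a.r u v ↔ b.r u v := by
  rw [← pair_iff ha huv hS, ← pair_iff hb huv hS]; exact hiff

/-- faithfulness of the two reduced representations of the odd-degree
Brauer category. -/
theorem brauer_odd_faithful {m n : ℕ} (hm : Odd m) (hn : Odd n)
    (a b : Ptn m n) (ha : IsBrauer a) (hb : IsBrauer b) :
    ((∀ (X : Finset (Fin m)) (Y : Finset (Fin n)), Odd X.card → Odd Y.card →
        (IsUnionOfBlocks a X Y ↔ IsUnionOfBlocks b X Y)) → a = b) ∧
    ((∀ (X : Finset (Fin m)) (Y : Finset (Fin n)), Even X.card → Even Y.card →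
        (IsUnionOfBlocks a X Y ↔ IsUnionOfBlocks b X Y)) → a = b) := by
  constructor
  · intro h
    apply Setoid.ext
    intro u v
    by_cases huv : u = v
    · subst huv; exact iff_of_true (a.refl u) (b.refl u)
    · -- case analysis
      have main : ∀ (X : Finset (Fin m)) (Y : Finset (Fin n)),
          (∀ w, w ∈ Sum.inl '' (X : Set (Fin m)) ∪ Sum.inr '' (Y : Set (Fin n)) ↔
            w = u ∨ w = v) →
          (IsUnionOfBlocks a X Y ↔ IsUnionOfBlocks b X Y) → (a.r u v ↔ b.r u v) :=
        fun X Y hS hiff => rel_iff_aux ha hb huv hS hiff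
      match u, v, huv with
      | Sum.inl i, Sum.inl i', huv =>
        have hii : i ≠ i' := fun h => huv (congrArg _ h)
        have hc : (({i, i'} : Finset (Fin m))ᶜ).card = m - 2 := by
          rw [Finset.card_compl, Finset.card_pair hii, Fintype.card_fin]
        have h2m : 2 ≤ m := by
          have := Finset.card_le_univ ({i, i'} : Finset (Fin m))
          simpa [Finset.card_pair hii] using this
        apply main ({i, i'} : Finset (Fin m)) (∅ : Finset (Fin n))
        · rintro (x | x) <;> simp [eq_comm]
        · rw [← unionOfBlocks_compl (X := {i,i'}) (Y := ∅),
            ← unionOfBlocks_compl (X := ({i,i'}:Finset (Fin m))) (Y := (∅ : Finset (Fin n))) (a := b)]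
          apply h
          · rw [hc]; exact Nat.Odd.sub_even h2m hm even_two
          · rw [Finset.compl_empty, Finset.card_univ, Fintype.card_fin]; exact hn
      | Sum.inl i, Sum.inr j, huv =>
        apply main ({i} : Finset (Fin m)) ({j} : Finset (Fin n))
        · rintro (x | x) <;> simp [eq_comm]
        · exact h _ _ (by simp) (by simp)
      | Sum.inr j, Sum.inl i, huv =>
        have := rel_iff_aux ha hb (u := Sum.inl i) (v := Sum.inr j) (by simp)
          (X := ({i} : Finset (Fin m))) (Y := ({j} : Finset (Fin n)))
          (by rintro (x | x) <;> simp [eq_comm])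
          (h _ _ (by simp) (by simp))
        exact ⟨fun hr => b.symm (this.mp (a.symm hr)), fun hr => a.symm (this.mpr (b.symm hr))⟩
      | Sum.inr j, Sum.inr j', huv =>
        have hjj : j ≠ j' := fun h => huv (congrArg _ h)
        have hc : (({j, j'} : Finset (Fin n))ᶜ).card = n - 2 := by
          rw [Finset.card_compl, Finset.card_pair hjj, Fintype.card_fin]
        have h2n : 2 ≤ n := by
          have := Finset.card_le_univ ({j, j'} : Finset (Fin n))
          simpa [Finset.card_pair hjj] using this
        apply main (∅ : Finset (Fin m)) ({j, j'} : Finset (Fin n))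
        · rintro (x | x) <;> simp [eq_comm]
        · rw [← unionOfBlocks_compl (X := (∅ : Finset (Fin m))) (Y := ({j,j'}:Finset (Fin n))),
            ← unionOfBlocks_compl (X := (∅ : Finset (Fin m))) (Y := ({j,j'}:Finset (Fin n))) (a := b)]
          apply h
          · rw [Finset.compl_empty, Finset.card_univ, Fintype.card_fin]; exact hm
          · rw [hc]; exact Nat.Odd.sub_even h2n hn even_two
  · intro h
    apply Setoid.ext
    intro u v
    by_cases huv : u = v
    · subst huv; exact iff_of_true (a.refl u) (b.refl u)
    · have main : ∀ (X : Finset (Fin m)) (Y : Finset (Fin n)),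
          (∀ w, w ∈ Sum.inl '' (X : Set (Fin m)) ∪ Sum.inr '' (Y : Set (Fin n)) ↔
            w = u ∨ w = v) →
          (IsUnionOfBlocks a X Y ↔ IsUnionOfBlocks b X Y) → (a.r u v ↔ b.r u v) :=
        fun X Y hS hiff => rel_iff_aux ha hb huv hS hiff
      match u, v, huv with
      | Sum.inl i, Sum.inl i', huv =>
        have hii : i ≠ i' := fun h => huv (congrArg _ h)
        apply main ({i, i'} : Finset (Fin m)) (∅ : Finset (Fin n))
        · rintro (x | x) <;> simp [eq_comm]
        · exact h _ _ (by rw [Finset.card_pair hii]; exact even_two) (by simp)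
      | Sum.inl i, Sum.inr j, huv =>
        apply main ({i} : Finset (Fin m)) ({j} : Finset (Fin n))
        · rintro (x | x) <;> simp [eq_comm]
        · rw [← unionOfBlocks_compl (X := ({i} : Finset (Fin m))) (Y := ({j}:Finset (Fin n))),
            ← unionOfBlocks_compl (X := ({i} : Finset (Fin m))) (Y := ({j}:Finset (Fin n))) (a := b)]
          apply h
          · rw [Finset.card_compl, Finset.card_singleton, Fintype.card_fin]
            exact Nat.Odd.sub_odd hm odd_one
          · rw [Finset.card_compl, Finset.card_singleton, Fintype.card_fin]
            exact Nat.Odd.sub_odd hn odd_one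
      | Sum.inr j, Sum.inl i, huv =>
        have hiff : IsUnionOfBlocks a ({i} : Finset (Fin m)) ({j} : Finset (Fin n)) ↔
            IsUnionOfBlocks b ({i} : Finset (Fin m)) ({j} : Finset (Fin n)) := by
          rw [← unionOfBlocks_compl (X := ({i} : Finset (Fin m))) (Y := ({j}:Finset (Fin n))),
            ← unionOfBlocks_compl (X := ({i} : Finset (Fin m))) (Y := ({j}:Finset (Fin n))) (a := b)]
          apply h
          · rw [Finset.card_compl, Finset.card_singleton, Fintype.card_fin]
            exact Nat.Odd.sub_odd hm odd_one
          · rw [Finset.card_compl, Finset.card_singleton, Fintype.card_fin]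
            exact Nat.Odd.sub_odd hn odd_one
        have := rel_iff_aux ha hb (u := Sum.inl i) (v := Sum.inr j) (by simp)
          (X := ({i} : Finset (Fin m))) (Y := ({j} : Finset (Fin n)))
          (by rintro (x | x) <;> simp [eq_comm]) hiff
        exact ⟨fun hr => b.symm (this.mp (a.symm hr)), fun hr => a.symm (this.mpr (b.symm hr))⟩
      | Sum.inr j, Sum.inr j', huv =>
        have hjj : j ≠ j' := fun h => huv (congrArg _ h)
        apply main (∅ : Finset (Fin m)) ({j, j'} : Finset (Fin n))
        · rintro (x | x) <;> simp [eq_comm]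
        · exact h _ _ (by simp) (by rw [Finset.card_pair hjj]; exact even_two)
end

section
/- Let a, b ∈ TL_{m,n} be Temperley–Lieb partitions. If for all Finsets X of Fin m and Y of Fin n with X.card even and Y.card even, (X,Y) is a union of a-blocks if and only if (X,Y) is a union of b-blocks, then a = b. (This is the faithfulness of the reduced representation ā⁰ of the Temperley–Lieb category; in particular each Temperley–Lieb monoid TL_{n,n} is faithfully represented by 2^{n-1} × 2^{n-1} matrices over any nontrivial idempotent semiring.) -/
open Classical

lemma brauer_partner {m n : ℕ} {a : Ptn m n} (ha : IsBrauer a) (u : Fin m ⊕ Fin n) :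
    ∃ w, w ≠ u ∧ a.r u w ∧ ∀ v, a.r u v → v = u ∨ v = w := by
  have h2 := ha u
  rw [Nat.card_eq_two_iff' ⟨u, a.refl u⟩] at h2
  obtain ⟨⟨w, hw⟩, hne, huniq⟩ := h2
  refine ⟨w, fun e => hne (Subtype.ext e), hw, fun v hv => ?_⟩
  by_cases hvu : v = u
  · exact Or.inl hvu
  · exact Or.inr (congrArg Subtype.val (huniq ⟨v, hv⟩ (fun e => hvu (congrArg Subtype.val e))))

lemma mem_TU {m n : ℕ} (T : Finset (Fin m ⊕ Fin n)) (u : Fin m ⊕ Fin n) :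
    u ∈ Sum.inl '' ((Finset.univ.filter fun i => Sum.inl i ∈ T : Finset (Fin m)) : Set (Fin m)) ∪
        Sum.inr '' ((Finset.univ.filter fun j => Sum.inr j ∈ T : Finset (Fin n)) : Set (Fin n)) ↔ u ∈ T := by
  cases u <;> simp

lemma union_of_closed {m n : ℕ} {a : Ptn m n} {σ : Fin m ⊕ Fin n → Fin m ⊕ Fin n}
    (hrel : ∀ u v, a.r u v ↔ v = u ∨ v = σ u) (hinv : ∀ u, σ (σ u) = u)
    (T : Finset (Fin m ⊕ Fin n)) (hT : ∀ u ∈ T, σ u ∈ T) :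
    IsUnionOfBlocks a (Finset.univ.filter fun i => Sum.inl i ∈ T)
      (Finset.univ.filter fun j => Sum.inr j ∈ T) := by
  intro u v huv
  rw [mem_TU, mem_TU]
  rcases (hrel u v).1 huv with rfl | rfl
  · exact Iff.rfl
  · exact ⟨fun h => hT u h, fun h => by have := hT _ h; rwa [hinv] at this⟩

lemma transversal_pair {m n : ℕ} {σ : Fin m ⊕ Fin n → Fin m ⊕ Fin n} {u : Fin m ⊕ Fin n}
    (h : (σ u).isLeft ≠ u.isLeft) :
    ∃ i j, ({u, σ u} : Finset (Fin m ⊕ Fin n)) = {Sum.inl i, Sum.inr j} := by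
  cases u with
  | inl i =>
    cases hσ : σ (Sum.inl i) with
    | inl i' => rw [hσ] at h; simp at h
    | inr j => exact ⟨i, j, rfl⟩
  | inr j =>
    cases hσ : σ (Sum.inr j) with
    | inl i => exact ⟨i, j, Finset.pair_comm _ _⟩
    | inr j' => rw [hσ] at h; simp at h

lemma same_side_pair {m n : ℕ} {σ : Fin m ⊕ Fin n → Fin m ⊕ Fin n} {u : Fin m ⊕ Fin n}
    (hne : σ u ≠ u) (h : (σ u).isLeft = u.isLeft) :
    (∃ x y : Fin m, x ≠ y ∧ ({u, σ u} : Finset (Fin m ⊕ Fin n)) = {Sum.inl x, Sum.inl y}) ∨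
    (∃ x y : Fin n, x ≠ y ∧ ({u, σ u} : Finset (Fin m ⊕ Fin n)) = {Sum.inr x, Sum.inr y}) := by
  cases u with
  | inl i =>
    cases hσ : σ (Sum.inl i) with
    | inl i' =>
      refine Or.inl ⟨i, i', fun e => hne (by rw [hσ, ← e]), rfl⟩
    | inr j => rw [hσ] at h; simp at h
  | inr j =>
    cases hσ : σ (Sum.inr j) with
    | inl i => rw [hσ] at h; simp at h
    | inr j' =>
      refine Or.inr ⟨j, j', fun e => hne (by rw [hσ, ← e]), rfl⟩

lemma dichotomy {m n : ℕ} {a : Ptn m n} {σ : Fin m ⊕ Fin n → Fin m ⊕ Fin n}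
    (hrel : ∀ u v, a.r u v ↔ v = u ∨ v = σ u) (hinv : ∀ u, σ (σ u) = u)
    (hne' : ∀ u, σ u ≠ u)
    {u v : Fin m ⊕ Fin n}
    (hR : ∀ (X : Finset (Fin m)) (Y : Finset (Fin n)), Even X.card → Even Y.card →
        IsUnionOfBlocks a X Y →
        (u ∈ Sum.inl '' (X : Set (Fin m)) ∪ Sum.inr '' (Y : Set (Fin n)) ↔
         v ∈ Sum.inl '' (X : Set (Fin m)) ∪ Sum.inr '' (Y : Set (Fin n))))
    (hnr : ¬ a.r u v) :
    (σ u).isLeft ≠ u.isLeft ∧ (σ v).isLeft ≠ v.isLeft ∧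
      ∀ w, (σ w).isLeft ≠ w.isLeft → w = u ∨ w = σ u ∨ w = v ∨ w = σ v := by
  have key : ∀ u' v' : Fin m ⊕ Fin n,
      (∀ (X : Finset (Fin m)) (Y : Finset (Fin n)), Even X.card → Even Y.card →
        IsUnionOfBlocks a X Y →
        (u' ∈ Sum.inl '' (X : Set (Fin m)) ∪ Sum.inr '' (Y : Set (Fin n)) ↔
         v' ∈ Sum.inl '' (X : Set (Fin m)) ∪ Sum.inr '' (Y : Set (Fin n)))) →
      ¬ a.r u' v' → (σ v').isLeft ≠ v'.isLeft := by
    intro u' v' hR' hnr' hsame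
    have hTclosed : ∀ w ∈ ({v', σ v'} : Finset (Fin m ⊕ Fin n)), σ w ∈ ({v', σ v'} : Finset (Fin m ⊕ Fin n)) := by
      intro w hw
      rcases Finset.mem_insert.1 hw with rfl | hw
      · exact Finset.mem_insert_of_mem (Finset.mem_singleton_self _)
      · rw [Finset.mem_singleton.1 hw, hinv]; exact Finset.mem_insert_self _ _
    have hcards : Even (Finset.univ.filter fun i => Sum.inl i ∈ ({v', σ v'} : Finset (Fin m ⊕ Fin n))).card ∧
        Even (Finset.univ.filter fun j => Sum.inr j ∈ ({v', σ v'} : Finset (Fin m ⊕ Fin n))).card := by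
      rcases same_side_pair (hne' v') hsame with ⟨x, y, hxy, hp⟩ | ⟨x, y, hxy, hp⟩
      · rw [hp]
        constructor
        · have : (Finset.univ.filter fun i => Sum.inl i ∈ ({Sum.inl x, Sum.inl y} : Finset (Fin m ⊕ Fin n))) = {x, y} := by
            ext z; simp
          rw [this, Finset.card_pair hxy]; exact ⟨1, rfl⟩
        · have : (Finset.univ.filter fun j => Sum.inr j ∈ ({Sum.inl x, Sum.inl y} : Finset (Fin m ⊕ Fin n))) = ∅ := by
            ext z; simp
          rw [this]; simp
      · rw [hp]
        constructor
        · have : (Finset.univ.filter fun i => Sum.inl i ∈ ({Sum.inr x, Sum.inr y} : Finset (Fin m ⊕ Fin n))) = ∅ := by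
            ext z; simp
          rw [this]; simp
        · have : (Finset.univ.filter fun j => Sum.inr j ∈ ({Sum.inr x, Sum.inr y} : Finset (Fin m ⊕ Fin n))) = {x, y} := by
            ext z; simp
          rw [this, Finset.card_pair hxy]; exact ⟨1, rfl⟩
    have hmem := hR' _ _ hcards.1 hcards.2 (union_of_closed hrel hinv _ hTclosed)
    rw [mem_TU, mem_TU] at hmem
    have hu'T := hmem.2 (Finset.mem_insert_self _ _)
    rcases Finset.mem_insert.1 hu'T with rfl | hu'
    · exact hnr' (a.refl u')
    · rw [Finset.mem_singleton.1 hu'] at hnr'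
      exact hnr' (a.symm ((hrel v' (σ v')).2 (Or.inr rfl)))
  have htu : (σ u).isLeft ≠ u.isLeft :=
    key v u (fun X Y hx hy hU => (hR X Y hx hy hU).symm) (fun e => hnr (a.symm e))
  have htv : (σ v).isLeft ≠ v.isLeft := key u v hR hnr
  refine ⟨htu, htv, ?_⟩
  intro w htw
  by_contra hcon
  push_neg at hcon
  obtain ⟨hwu, hwσu, hwv, hwσv⟩ := hcon
  obtain ⟨i, j, hij⟩ := transversal_pair htu
  obtain ⟨i', j', hij'⟩ := transversal_pair htw
  have hT : ∀ x ∈ ({u, σ u} ∪ {w, σ w} : Finset (Fin m ⊕ Fin n)),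
      σ x ∈ ({u, σ u} ∪ {w, σ w} : Finset (Fin m ⊕ Fin n)) := by
    intro x hx
    rcases Finset.mem_union.1 hx with hx | hx <;> rcases Finset.mem_insert.1 hx with rfl | hx
    · exact Finset.mem_union_left _ (Finset.mem_insert_of_mem (Finset.mem_singleton_self _))
    · rw [Finset.mem_singleton.1 hx, hinv]
      exact Finset.mem_union_left _ (Finset.mem_insert_self _ _)
    · exact Finset.mem_union_right _ (Finset.mem_insert_of_mem (Finset.mem_singleton_self _))
    · rw [Finset.mem_singleton.1 hx, hinv]
      exact Finset.mem_union_right _ (Finset.mem_insert_self _ _)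
  have hU := union_of_closed hrel hinv _ hT
  have hTform : ({u, σ u} ∪ {w, σ w} : Finset (Fin m ⊕ Fin n))
      = {Sum.inl i, Sum.inr j, Sum.inl i', Sum.inr j'} := by
    rw [hij, hij']
    ext z; simp only [Finset.mem_union, Finset.mem_insert, Finset.mem_singleton]
    tauto
  have hii : i ≠ i' := by
    intro e
    have h1 : (Sum.inl i : Fin m ⊕ Fin n) ∈ ({u, σ u} : Finset _) := by
      rw [hij]; exact Finset.mem_insert_self _ _
    have h2 : (Sum.inl i : Fin m ⊕ Fin n) ∈ ({w, σ w} : Finset _) := by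
      rw [hij', ← e]; exact Finset.mem_insert_self _ _
    rcases Finset.mem_insert.1 h1 with e1 | e1 <;>
      rcases Finset.mem_insert.1 h2 with e2 | e2
    · exact hwu (e2.symm.trans e1)
    · have h3 : σ w = u := (Finset.mem_singleton.1 e2).symm.trans e1
      exact hwσu (by rw [← h3, hinv])
    · exact hwσu (e2.symm.trans (Finset.mem_singleton.1 e1))
    · have h3 : σ w = σ u := (Finset.mem_singleton.1 e2).symm.trans (Finset.mem_singleton.1 e1)
      exact hwu (by rw [← hinv w, h3, hinv])
  have hjj : j ≠ j' := by
    intro e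
    have h1 : (Sum.inr j : Fin m ⊕ Fin n) ∈ ({u, σ u} : Finset _) := by
      rw [hij]; exact Finset.mem_insert_of_mem (Finset.mem_singleton_self _)
    have h2 : (Sum.inr j : Fin m ⊕ Fin n) ∈ ({w, σ w} : Finset _) := by
      rw [hij', ← e]; exact Finset.mem_insert_of_mem (Finset.mem_singleton_self _)
    rcases Finset.mem_insert.1 h1 with e1 | e1 <;>
      rcases Finset.mem_insert.1 h2 with e2 | e2
    · exact hwu (e2.symm.trans e1)
    · have h3 : σ w = u := (Finset.mem_singleton.1 e2).symm.trans e1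
      exact hwσu (by rw [← h3, hinv])
    · exact hwσu (e2.symm.trans (Finset.mem_singleton.1 e1))
    · have h3 : σ w = σ u := (Finset.mem_singleton.1 e2).symm.trans (Finset.mem_singleton.1 e1)
      exact hwu (by rw [← hinv w, h3, hinv])
  have hcardX : Even (Finset.univ.filter fun z => Sum.inl z ∈ ({u, σ u} ∪ {w, σ w} : Finset (Fin m ⊕ Fin n))).card := by
    have : (Finset.univ.filter fun z => Sum.inl z ∈ ({u, σ u} ∪ {w, σ w} : Finset (Fin m ⊕ Fin n))) = {i, i'} := by
      ext z; rw [hTform] at *; simp [hTform]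
    rw [this, Finset.card_pair hii]; exact ⟨1, rfl⟩
  have hcardY : Even (Finset.univ.filter fun z => Sum.inr z ∈ ({u, σ u} ∪ {w, σ w} : Finset (Fin m ⊕ Fin n))).card := by
    have : (Finset.univ.filter fun z => Sum.inr z ∈ ({u, σ u} ∪ {w, σ w} : Finset (Fin m ⊕ Fin n))) = {j, j'} := by
      ext z; simp [hTform]
    rw [this, Finset.card_pair hjj]; exact ⟨1, rfl⟩
  have hmem := hR _ _ hcardX hcardY hU
  rw [mem_TU, mem_TU] at hmem
  have hvT := hmem.1 (Finset.mem_union_left _ (Finset.mem_insert_self _ _))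
  rcases Finset.mem_union.1 hvT with hv | hv <;> rcases Finset.mem_insert.1 hv with e | e
  · exact hnr (e ▸ a.refl u)
  · exact hnr ((hrel u v).2 (Or.inr (Finset.mem_singleton.1 e)))
  · exact hwv e.symm
  · exact hwσv (by rw [← hinv w, ← Finset.mem_singleton.1 e])

lemma cross {m n : ℕ} {a b : Ptn m n}
    (hpa : ¬ ∃ u v p q : Fin m ⊕ Fin n, a.r u v ∧ a.r p q ∧
        beta m n u < beta m n p ∧ beta m n p < beta m n v ∧ beta m n v < beta m n q)
    (hpb : ¬ ∃ u v p q : Fin m ⊕ Fin n, b.r u v ∧ b.r p q ∧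
        beta m n u < beta m n p ∧ beta m n p < beta m n v ∧ beta m n v < beta m n q)
    {i i' : Fin m} {j j' : Fin n}
    (ha1 : a.r (Sum.inl i) (Sum.inr j)) (ha2 : a.r (Sum.inl i') (Sum.inr j'))
    (hb1 : b.r (Sum.inl i) (Sum.inr j')) (hb2 : b.r (Sum.inl i') (Sum.inr j))
    (hii : i < i') (hjj : j ≠ j') : False := by
  have hi := i.isLt
  have hi' := i'.isLt
  have hj := j.isLt
  have hj' := j'.isLt
  have hbl : ∀ x : Fin m, beta m n (Sum.inl x) = (x : ℕ) := fun x => rfl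
  have hbr : ∀ y : Fin n, beta m n (Sum.inr y) = m + n - 1 - (y : ℕ) := fun y => rfl
  rcases lt_trichotomy (j : ℕ) (j' : ℕ) with hlt | heq | hlt
  · exact hpb ⟨Sum.inl i, Sum.inr j', Sum.inl i', Sum.inr j, hb1, hb2, by
      rw [hbl, hbl]; exact_mod_cast hii, by rw [hbl, hbr]; omega, by rw [hbr, hbr]; omega⟩
  · exact hjj (Fin.ext heq)
  · exact hpa ⟨Sum.inl i, Sum.inr j, Sum.inl i', Sum.inr j', ha1, ha2, by
      rw [hbl, hbl]; exact_mod_cast hii, by rw [hbl, hbr]; omega, by rw [hbr, hbr]; omega⟩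

lemma tl_rel_mono {m n : ℕ} (a b : Ptn m n) (ha : IsTL a) (hb : IsTL b)
    (h : ∀ (X : Finset (Fin m)) (Y : Finset (Fin n)), Even X.card → Even Y.card →
      (IsUnionOfBlocks a X Y ↔ IsUnionOfBlocks b X Y))
    {u v : Fin m ⊕ Fin n} (huv : a.r u v) : b.r u v := by
  by_contra hbuv
  choose σa hane ha1 ha2 using fun u => brauer_partner ha.1 u
  choose σb hbne hb1 hb2 using fun u => brauer_partner hb.1 u
  have hrel_a : ∀ u v, a.r u v ↔ v = u ∨ v = σa u := by
    intro u v
    refine ⟨ha2 u v, ?_⟩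
    rintro (rfl | rfl)
    exacts [a.refl _, ha1 _]
  have hrel_b : ∀ u v, b.r u v ↔ v = u ∨ v = σb u := by
    intro u v
    refine ⟨hb2 u v, ?_⟩
    rintro (rfl | rfl)
    exacts [b.refl _, hb1 _]
  have hinv_a : ∀ u, σa (σa u) = u := by
    intro u
    rcases (hrel_a (σa u) u).1 (a.symm (ha1 u)) with e | e
    · exact absurd e.symm (hane u)
    · exact e.symm
  have hinv_b : ∀ u, σb (σb u) = u := by
    intro u
    rcases (hrel_b (σb u) u).1 (b.symm (hb1 u)) with e | e
    · exact absurd e.symm (hbne u)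
    · exact e.symm
  have Ra : ∀ {p q : Fin m ⊕ Fin n}, b.r p q →
      ∀ (X : Finset (Fin m)) (Y : Finset (Fin n)), Even X.card → Even Y.card →
        IsUnionOfBlocks a X Y →
        (p ∈ Sum.inl '' (X : Set (Fin m)) ∪ Sum.inr '' (Y : Set (Fin n)) ↔
         q ∈ Sum.inl '' (X : Set (Fin m)) ∪ Sum.inr '' (Y : Set (Fin n))) :=
    fun hpq X Y hx hy hU => ((h X Y hx hy).1 hU) _ _ hpq
  have Rb : ∀ {p q : Fin m ⊕ Fin n}, a.r p q →
      ∀ (X : Finset (Fin m)) (Y : Finset (Fin n)), Even X.card → Even Y.card →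
        IsUnionOfBlocks b X Y →
        (p ∈ Sum.inl '' (X : Set (Fin m)) ∪ Sum.inr '' (Y : Set (Fin n)) ↔
         q ∈ Sum.inl '' (X : Set (Fin m)) ∪ Sum.inr '' (Y : Set (Fin n))) :=
    fun hpq X Y hx hy hU => ((h X Y hx hy).2 hU) _ _ hpq
  have main : ∀ (i : Fin m) (j : Fin n), a.r (Sum.inl i) (Sum.inr j) →
      ¬ b.r (Sum.inl i) (Sum.inr j) → False := by
    intro i j hab hnb
    have hva : Sum.inr j = σa (Sum.inl i) :=
      ((hrel_a _ _).1 hab).resolve_left (by simp)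
    obtain ⟨tb1, tb2, hallb⟩ := dichotomy hrel_b hinv_b hbne (Rb hab) hnb
    obtain ⟨j2, hσ1⟩ : ∃ j2, σb (Sum.inl i) = Sum.inr j2 := by
      cases hσ : σb (Sum.inl i) with
      | inl z => rw [hσ] at tb1; simp at tb1
      | inr z => exact ⟨z, rfl⟩
    obtain ⟨i2, hσ2⟩ : ∃ i2, σb (Sum.inr j) = Sum.inl i2 := by
      cases hσ : σb (Sum.inr j) with
      | inl z => exact ⟨z, rfl⟩
      | inr z => rw [hσ] at tb2; simp at tb2
    have hb_ij2 : b.r (Sum.inl i) (Sum.inr j2) := hσ1 ▸ hb1 (Sum.inl i)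
    have hb_i2j : b.r (Sum.inl i2) (Sum.inr j) := b.symm (hσ2 ▸ hb1 (Sum.inr j))
    have hj2j : j2 ≠ j := by
      rintro rfl; exact hnb hb_ij2
    have hi2i : i2 ≠ i := by
      rintro rfl; exact hnb hb_i2j
    have hna_ij2 : ¬ a.r (Sum.inl i) (Sum.inr j2) := by
      intro hr
      rcases (hrel_a _ _).1 hr with e | e
      · exact absurd e (by simp)
      · rw [← hva] at e
        exact hj2j (by injection e)
    obtain ⟨ta1, ta2, halla⟩ := dichotomy hrel_a hinv_a hane (Ra hb_ij2) hna_ij2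
    obtain ⟨i3, hσ3⟩ : ∃ i3, σa (Sum.inr j2) = Sum.inl i3 := by
      cases hσ : σa (Sum.inr j2) with
      | inl z => exact ⟨z, rfl⟩
      | inr z => rw [hσ] at ta2; simp at ta2
    have ha_i3j2 : a.r (Sum.inl i3) (Sum.inr j2) := a.symm (hσ3 ▸ ha1 (Sum.inr j2))
    have hi3i : i3 ≠ i := by
      rintro rfl; exact hna_ij2 ha_i3j2
    have hσb_j2 : σb (Sum.inr j2) = Sum.inl i := by
      rw [← hσ1, hinv_b]
    have hnb_i3j2 : ¬ b.r (Sum.inl i3) (Sum.inr j2) := by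
      intro hr
      rcases (hrel_b _ _).1 hr with e | e
      · exact absurd e (by simp)
      · have h5 : σb (Sum.inr j2) = Sum.inl i3 := by rw [e, hinv_b]
        rw [hσb_j2] at h5
        exact hi3i (Sum.inl.inj h5).symm
    obtain ⟨tb3, tb4, hallb2⟩ := dichotomy hrel_b hinv_b hbne (Rb ha_i3j2) hnb_i3j2
    have hσb_i2 : σb (Sum.inl i2) = Sum.inr j := by
      rw [← hσ2, hinv_b]
    have htr_i2 : (σb (Sum.inl i2)).isLeft ≠ (Sum.inl i2 : Fin m ⊕ Fin n).isLeft := by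
      rw [hσb_i2]; simp
    have hi2cases := hallb2 (Sum.inl i2) htr_i2
    have hi23 : i2 = i3 := by
      rcases hi2cases with e | e | e | e
      · exact by injection e
      · have h4 : σb (Sum.inl i2) = Sum.inl i3 := by rw [e, hinv_b]
        rw [hσb_i2] at h4
        exact absurd h4 (by simp)
      · exact absurd e (by simp)
      · rw [hσb_j2] at e
        exact absurd (by injection e : i2 = i) hi2i
    rw [hi23] at hb_i2j
    rcases lt_trichotomy i i3 with hlt | heq | hlt
    · exact cross ha.2 hb.2 hab ha_i3j2 hb_ij2 hb_i2j hlt (Ne.symm hj2j)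
    · exact hi3i heq.symm
    · exact cross ha.2 hb.2 ha_i3j2 hab hb_i2j hb_ij2 hlt hj2j
  -- reduce to the inl/inr case
  have hne_uv : u ≠ v := by rintro rfl; exact hbuv (b.refl u)
  have hva : v = σa u := ((hrel_a u v).1 huv).resolve_left hne_uv.symm
  obtain ⟨tb1', tb2', -⟩ := dichotomy hrel_b hinv_b hbne (Rb huv) hbuv
  have hside : u.isLeft ≠ v.isLeft := by
    intro hsame
    have hnar : ¬ a.r u (σb u) := by
      intro hr
      rcases (hrel_a u _).1 hr with e | e
      · exact tb1' (by rw [e])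
      · rw [← hva] at e
        exact tb1' (by rw [e, ← hsame])
    obtain ⟨hta_u, -, -⟩ := dichotomy hrel_a hinv_a hane (Ra (hb1 u)) hnar
    rw [← hva] at hta_u
    exact hta_u hsame.symm
  cases u with
  | inl i =>
    cases v with
    | inl i' => simp at hside
    | inr j => exact main i j huv hbuv
  | inr j =>
    cases v with
    | inl i' => exact main i' j (a.symm huv) (fun e => hbuv (b.symm e))
    | inr j' => simp at hside

/-- faithfulness of the reduced representation `ā⁰` of the
Temperley–Lieb category. -/
theorem tl_even_faithful {m n : ℕ} (a b : Ptn m n) (ha : IsTL a) (hb : IsTL b)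
    (h : ∀ (X : Finset (Fin m)) (Y : Finset (Fin n)), Even X.card → Even Y.card →
      (IsUnionOfBlocks a X Y ↔ IsUnionOfBlocks b X Y)) :
    a = b := by
  apply Setoid.ext
  intro u v
  exact ⟨fun hr => tl_rel_mono a b ha hb h hr,
    fun hr => tl_rel_mono b a hb ha (fun X Y hx hy => (h X Y hx hy).symm) hr⟩
end

section
/- Let a ∈ TL_{m,n} be a Temperley–Lieb partition. Then: (1) if {Sum.inl i, Sum.inl j} is a block of a with i ≠ j, then (i : ℕ) and (j : ℕ) have different parity; (2) if {Sum.inr i, Sum.inr j} is a block of a with i ≠ j, then (i : ℕ) and (j : ℕ) have different parity; (3) if a block of a contains both Sum.inl i and Sum.inr j, then (i : ℕ) and (j : ℕ) have the same parity; (4) rank(a) ≡ m (mod 2) and m ≡ n (mod 2); (5) if the elements of dom(a), listed in increasing order, are x_1 < ⋯ < x_r, then (x_i : ℕ) + 1 ≡ i (mod 2) for every 1 ≤ i ≤ r; (6) likewise, if the elements of codom(a) in increasing order are y_1 < ⋯ < y_r, then (y_i : ℕ) + 1 ≡ i (mod 2) for every i. -/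
open Classical

/-! ### Auxiliary lemmas for `tl_parity` -/

lemma even_card_invol {α : Type*} (s : Finset α) (f : α → α)
    (hmem : ∀ x ∈ s, f x ∈ s) (hinv : ∀ x ∈ s, f (f x) = x) (hne : ∀ x ∈ s, f x ≠ x) :
    Even s.card := by
  classical
  generalize hN : s.card = N
  induction N using Nat.strong_induction_on generalizing s with
  | _ N ih =>
    rcases Nat.eq_zero_or_pos N with h0 | hpos
    · simp [h0]
    · have hsne : s.Nonempty := by
        rw [← Finset.card_pos, hN]; exact hpos
      obtain ⟨x, hx⟩ := hsne
      set t := s \ {x, f x} with ht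
      have hsub : ({x, f x} : Finset α) ⊆ s := by
        intro z hz
        simp only [Finset.mem_insert, Finset.mem_singleton] at hz
        rcases hz with rfl | rfl
        · exact hx
        · exact hmem x hx
      have hpair : ({x, f x} : Finset α).card = 2 :=
        Finset.card_pair (Ne.symm (hne x hx))
      have htcard : t.card = N - 2 := by
        rw [ht, Finset.card_sdiff_of_subset hsub, hpair, hN]
      have h2N : 2 ≤ N := by
        rw [← hN, ← hpair]; exact Finset.card_le_card hsub
      have hts : ∀ z ∈ t, z ∈ s ∧ z ≠ x ∧ z ≠ f x := by
        intro z hz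
        simp only [ht, Finset.mem_sdiff, Finset.mem_insert, Finset.mem_singleton] at hz
        tauto
      have hmemt : ∀ z ∈ t, f z ∈ t := by
        intro z hz
        obtain ⟨hzs, hzx, hzfx⟩ := hts z hz
        simp only [ht, Finset.mem_sdiff, Finset.mem_insert, Finset.mem_singleton]
        refine ⟨hmem z hzs, ?_⟩
        rintro (h | h)
        · exact hzfx (by rw [← hinv z hzs, h])
        · apply hzx
          have := congrArg f h
          rw [hinv z hzs, hinv x hx] at this
          exact this
      have hev : Even (N - 2) := by
        refine ih (N - 2) (by omega) t hmemt ?_ ?_ htcard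
        · intro z hz; exact hinv z (hts z hz).1
        · intro z hz; exact hne z (hts z hz).1
      rw [Nat.even_iff] at hev ⊢
      omega

section Partner
variable {m n : ℕ} {a : Ptn m n}

lemma exists_unique_partner (hb : IsBrauer a) (u : Fin m ⊕ Fin n) :
    ∃! v, a.r u v ∧ v ≠ u := by
  obtain ⟨⟨v, hv⟩, hvne, huniq⟩ :=
    (Nat.card_eq_two_iff' (⟨u, a.refl u⟩ : {v // a.r u v})).mp (hb u)
  refine ⟨v, ⟨hv, fun h => hvne (Subtype.ext h)⟩, ?_⟩
  intro y ⟨hy, hyne⟩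
  have := huniq ⟨y, hy⟩ (fun h => hyne (congrArg Subtype.val h))
  exact congrArg Subtype.val this

noncomputable def partner (hb : IsBrauer a) (u : Fin m ⊕ Fin n) : Fin m ⊕ Fin n :=
  (exists_unique_partner hb u).exists.choose

lemma partner_rel (hb : IsBrauer a) (u : Fin m ⊕ Fin n) : a.r u (partner hb u) :=
  (exists_unique_partner hb u).exists.choose_spec.1

lemma partner_ne (hb : IsBrauer a) (u : Fin m ⊕ Fin n) : partner hb u ≠ u :=
  (exists_unique_partner hb u).exists.choose_spec.2

lemma partner_eq (hb : IsBrauer a) {u v : Fin m ⊕ Fin n} (h : a.r u v) (hne : v ≠ u) :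
    partner hb u = v := by
  obtain ⟨w, hw, huniq⟩ := exists_unique_partner hb u
  rw [huniq _ ⟨partner_rel hb u, partner_ne hb u⟩, huniq _ ⟨h, hne⟩]

lemma rel_iff_partner (hb : IsBrauer a) {u v : Fin m ⊕ Fin n} :
    a.r u v ↔ v = u ∨ v = partner hb u := by
  constructor
  · intro h
    by_cases hne : v = u
    · exact Or.inl hne
    · exact Or.inr (partner_eq hb h hne).symm
  · rintro (rfl | rfl)
    · exact a.refl _
    · exact partner_rel hb u

lemma partner_partner (hb : IsBrauer a) (u : Fin m ⊕ Fin n) :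
    partner hb (partner hb u) = u :=
  partner_eq hb (a.symm (partner_rel hb u)) (Ne.symm (partner_ne hb u))

end Partner

section Beta
variable {m n : ℕ} {a : Ptn m n}

lemma beta_inl (i : Fin m) : beta m n (Sum.inl i) = (i : ℕ) := rfl

lemma beta_inr (j : Fin n) : beta m n (Sum.inr j) = m + n - 1 - (j : ℕ) := rfl

lemma beta_inl_lt (i : Fin m) : beta m n (Sum.inl i) < m := i.2

lemma beta_inr_ge (j : Fin n) : m ≤ beta m n (Sum.inr j) := by
  have := j.2; simp only [beta_inr]; omega

lemma beta_inr_lt (j : Fin n) : beta m n (Sum.inr j) < m + n := by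
  have := j.2; simp only [beta_inr]; omega

lemma beta_inj : Function.Injective (beta m n) := by
  rintro (i | i) (j | j) h
  · simp only [beta_inl] at h; exact congrArg Sum.inl (Fin.ext h)
  · exact absurd h (by have := beta_inr_ge (m := m) j; have := beta_inl_lt (n := n) i; omega)
  · exact absurd h (by have := beta_inr_ge (m := m) i; have := beta_inl_lt (n := n) j; omega)
  · have hi := i.2; have hj := j.2
    simp only [beta_inr] at h
    exact congrArg Sum.inr (Fin.ext (by omega))

lemma beta_surj (x : ℕ) (hx : x < m + n) : ∃ u : Fin m ⊕ Fin n, beta m n u = x := by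
  by_cases hxm : x < m
  · exact ⟨Sum.inl ⟨x, hxm⟩, rfl⟩
  · refine ⟨Sum.inr ⟨m + n - 1 - x, by omega⟩, ?_⟩
    simp only [beta_inr]; omega

lemma beta_lt (u : Fin m ⊕ Fin n) : beta m n u < m + n := by
  cases u with
  | inl i => exact lt_of_lt_of_le (beta_inl_lt i) (Nat.le_add_right m n)
  | inr j => exact beta_inr_lt j

lemma beta_parity_lt (ht : IsTL a) {u v : Fin m ⊕ Fin n} (h : a.r u v)
    (hlt : beta m n u < beta m n v) : beta m n u % 2 ≠ beta m n v % 2 := by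
  classical
  obtain ⟨hb, hcross⟩ := ht
  have hne : u ≠ v := fun h' => by rw [h'] at hlt; exact lt_irrefl _ hlt
  set S : Finset (Fin m ⊕ Fin n) := Finset.univ.filter
    (fun w => beta m n u < beta m n w ∧ beta m n w < beta m n v) with hS
  have hmemS : ∀ w ∈ S, partner hb w ∈ S := by
    intro w hw
    simp only [hS, Finset.mem_filter, Finset.mem_univ, true_and] at hw ⊢
    have hww' : a.r w (partner hb w) := partner_rel hb w
    have h1 : partner hb w ≠ u := by
      intro heq
      have : w = v := by
        rw [← partner_eq hb h hne.symm, ← heq, partner_partner]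
      rw [this] at hw; exact lt_irrefl _ hw.2
    have h2 : partner hb w ≠ v := by
      intro heq
      have : w = u := by
        rw [← partner_eq hb (a.symm h) hne, ← heq, partner_partner]
      rw [this] at hw; exact lt_irrefl _ hw.1
    by_contra hnot
    push_neg at hnot
    rcases lt_or_ge (beta m n (partner hb w)) (beta m n u) with hc | hc
    · exact hcross ⟨partner hb w, w, u, v, a.symm hww', h, hc, hw.1, hw.2⟩
    · have hc1 : beta m n u < beta m n (partner hb w) :=
        lt_of_le_of_ne hc (fun h' => h1 (beta_inj h'.symm))
      have hc2 : beta m n v ≤ beta m n (partner hb w) := hnot hc1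
      have hc3 : beta m n v < beta m n (partner hb w) :=
        lt_of_le_of_ne hc2 (fun h' => h2 (beta_inj h'.symm))
      exact hcross ⟨u, v, w, partner hb w, h, hww', hw.1, hw.2, hc3⟩
  have hcard : S.card = beta m n v - beta m n u - 1 := by
    have := Finset.card_bij (s := S) (t := Finset.Ico (beta m n u + 1) (beta m n v))
      (fun w _ => beta m n w)
      (by
        intro w hw
        simp only [hS, Finset.mem_filter, Finset.mem_univ, true_and] at hw
        simp only [Finset.mem_Ico]
        omega)
      (by
        intro w₁ h₁ w₂ h₂ heq
        exact beta_inj heq)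
      (by
        intro b hb'
        simp only [Finset.mem_Ico] at hb'
        obtain ⟨w, hw⟩ := beta_surj b (lt_trans hb'.2 (beta_lt v))
        refine ⟨w, ?_, hw⟩
        simp only [hS, Finset.mem_filter, Finset.mem_univ, true_and]
        omega)
    rw [this, Nat.card_Ico]
    omega
  have hEven : Even S.card := even_card_invol S (partner hb) hmemS
    (fun w _ => partner_partner hb w) (fun w _ => partner_ne hb w)
  rw [Nat.even_iff] at hEven
  omega

lemma beta_parity (ht : IsTL a) {u v : Fin m ⊕ Fin n} (h : a.r u v) (hne : u ≠ v) :
    ¬ (beta m n u ≡ beta m n v [MOD 2]) := by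
  intro hmod
  have hbne : beta m n u ≠ beta m n v := fun h' => hne (beta_inj h')
  have hmod' : beta m n u % 2 = beta m n v % 2 := hmod
  rcases lt_or_gt_of_ne hbne with hlt | hlt
  · exact beta_parity_lt ht h hlt hmod'
  · exact beta_parity_lt ht (a.symm h) hlt hmod'.symm

lemma even_add_mn (hb : IsBrauer a) : Even (m + n) := by
  have := even_card_invol (Finset.univ : Finset (Fin m ⊕ Fin n)) (partner hb)
    (fun x _ => Finset.mem_univ _) (fun x _ => partner_partner hb x)
    (fun x _ => partner_ne hb x)
  simpa [Finset.card_univ] using this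

end Beta

lemma card_filter_lt_sort {N : ℕ} (s : Finset (Fin N)) (k : ℕ)
    (h : k < (s.sort (· ≤ ·)).length) :
    (s.filter (fun y => y < (s.sort (· ≤ ·)).get ⟨k, h⟩)).card = k := by
  set l := s.sort (· ≤ ·) with hl
  set x := l.get ⟨k, h⟩ with hx
  have hsorted : l.SortedLT := Finset.sortedLT_sort s
  have hmono : StrictMono l.get := hsorted.strictMono_get
  have hc1 : (s.filter (fun y => y < x)).card = (l.filter (fun y => y < x)).length := by
    rw [Finset.card, Finset.filter_val, ← Finset.sort_eq s (· ≤ ·), ← hl,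
      Multiset.filter_coe, Multiset.coe_card]
  have h2 : l.filter (fun y => y < x) = l.take k := by
    have hld : l = l.take k ++ l.drop k := (List.take_append_drop k l).symm
    have hA : (l.take k).filter (fun y => y < x) = l.take k := by
      apply List.filter_eq_self.mpr
      intro y hy
      obtain ⟨i, hi, rfl⟩ := List.mem_iff_getElem.mp hy
      have hik : i < k := lt_of_lt_of_le hi (by rw [List.length_take]; exact min_le_left _ _)
      have hil : i < l.length := lt_of_lt_of_le hi (by rw [List.length_take]; omega)
      have : (l.take k)[i] = l[i] := List.getElem_take
      rw [this]
      have : l.get ⟨i, hil⟩ < l.get ⟨k, h⟩ := hmono (by exact hik)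
      simpa [hx] using this
    have hB : (l.drop k).filter (fun y => y < x) = [] := by
      apply List.filter_eq_nil_iff.mpr
      intro y hy
      obtain ⟨i, hi, rfl⟩ := List.mem_iff_getElem.mp hy
      have hkl : k + i < l.length := by rw [List.length_drop] at hi; omega
      have : (l.drop k)[i] = l[k + i] := by rw [List.getElem_drop]
      rw [this]
      have hle : l.get ⟨k, h⟩ ≤ l.get ⟨k + i, hkl⟩ :=
        hmono.monotone (by simp [Fin.mk_le_mk])
      simp only [decide_eq_true_eq, not_lt]
      simpa [hx] using hle
    conv_lhs => rw [hld]
    rw [List.filter_append, hA, hB, List.append_nil]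
  rw [hc1, h2, List.length_take]
  omega

lemma card_filter_lt_fin {N : ℕ} (x : Fin N) :
    (Finset.univ.filter (fun z => z < x)).card = (x : ℕ) := by
  have he : Finset.univ.filter (fun z : Fin N => z < x) = Finset.Iio x := by
    ext z; simp
  rw [he, Fin.card_Iio]

section DomCodom
variable {m n : ℕ} {a : Ptn m n}

lemma mem_dom {i : Fin m} : i ∈ ptnDom a ↔ ∃ j : Fin n, a.r (Sum.inl i) (Sum.inr j) := by
  simp [ptnDom]

lemma mem_codom {j : Fin n} : j ∈ ptnCodom a ↔ ∃ i : Fin m, a.r (Sum.inl i) (Sum.inr j) := by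
  simp [ptnCodom]

lemma partner_inl_of_not_dom (hb : IsBrauer a) {i : Fin m} (hi : i ∉ ptnDom a) :
    ∃ i' : Fin m, partner hb (Sum.inl i) = Sum.inl i' := by
  rcases hp : partner hb (Sum.inl i) with i' | j'
  · exact ⟨i', rfl⟩
  · exact absurd (mem_dom.mpr ⟨j', hp ▸ partner_rel hb (Sum.inl i)⟩) hi

lemma not_dom_of_partner_inl (hb : IsBrauer a) {z z' : Fin m}
    (hz : partner hb (Sum.inl z) = Sum.inl z') : z' ∉ ptnDom a := by
  intro hmem
  obtain ⟨j, hj⟩ := mem_dom.mp hmem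
  rcases (rel_iff_partner hb).mp hj with h | h
  · exact absurd h (by simp)
  · rw [← hz, partner_partner] at h
    exact absurd h (by simp)

lemma partner_inr_of_not_codom (hb : IsBrauer a) {j : Fin n} (hj : j ∉ ptnCodom a) :
    ∃ j' : Fin n, partner hb (Sum.inr j) = Sum.inr j' := by
  rcases hp : partner hb (Sum.inr j) with i' | j'
  · exact absurd (mem_codom.mpr ⟨i', a.symm (hp ▸ partner_rel hb (Sum.inr j))⟩) hj
  · exact ⟨j', rfl⟩

lemma not_codom_of_partner_inr (hb : IsBrauer a) {z z' : Fin n}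
    (hz : partner hb (Sum.inr z) = Sum.inr z') : z' ∉ ptnCodom a := by
  intro hmem
  obtain ⟨i, hi⟩ := mem_codom.mp hmem
  rcases (rel_iff_partner hb).mp (a.symm hi) with h | h
  · exact absurd h (by simp)
  · rw [← hz, partner_partner] at h
    exact absurd h (by simp)

lemma rank_eq_card_dom (hb : IsBrauer a) : ptnRank a = (ptnDom a).card := by
  classical
  have hbij : Function.Bijective
      (fun i : {i // i ∈ ptnDom a} =>
        (⟨Quotient.mk a (Sum.inl i.1), i.1, (mem_dom.mp i.2).choose,
          rfl, Quotient.sound (a.symm (mem_dom.mp i.2).choose_spec)⟩ :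
          {C : Quotient a // ∃ (i : Fin m) (j : Fin n),
            Quotient.mk a (Sum.inl i) = C ∧ Quotient.mk a (Sum.inr j) = C})) := by
    constructor
    · rintro ⟨i, hi⟩ ⟨i', hi'⟩ heq
      simp only [Subtype.mk.injEq] at heq
      have hrel : a.r (Sum.inl i) (Sum.inl i') := Quotient.exact heq
      rcases (rel_iff_partner hb).mp hrel with h | h
      · exact Subtype.ext (Sum.inl_injective h.symm)
      · obtain ⟨j, hj⟩ := mem_dom.mp hi
        rw [partner_eq hb hj (by simp)] at h
        exact absurd h (by simp)
    · rintro ⟨C, i, j, hi, hj⟩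
      have hrel : a.r (Sum.inl i) (Sum.inr j) := Quotient.exact (hi.trans hj.symm)
      exact ⟨⟨i, mem_dom.mpr ⟨j, hrel⟩⟩, Subtype.ext hi⟩
  have := Nat.card_congr (Equiv.ofBijective _ hbij)
  rw [ptnRank, ← this, Nat.card_eq_fintype_card, Fintype.card_coe]

end DomCodom

section EvenCounts
variable {m n : ℕ} {a : Ptn m n}

lemma even_card_below_dom (ht : IsTL a) {x : Fin m} (hx : x ∈ ptnDom a) :
    Even ((Finset.univ.filter (fun z : Fin m => z < x ∧ z ∉ ptnDom a)).card) := by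
  classical
  have hb := ht.1
  obtain ⟨j, hj⟩ := mem_dom.mp hx
  set g : Fin m → Fin m := fun z => Sum.elim id (fun _ => z) (partner hb (Sum.inl z)) with hg
  have hgz : ∀ (z z' : Fin m), partner hb (Sum.inl z) = Sum.inl z' → g z = z' := by
    intro z z' hp; simp [hg, hp]
  have key : ∀ z : Fin m, z < x → z ∉ ptnDom a →
      ∃ z', partner hb (Sum.inl z) = Sum.inl z' ∧ z' < x ∧ z' ∉ ptnDom a ∧ z' ≠ z := by
    intro z hzx hzd
    obtain ⟨z', hz'⟩ := partner_inl_of_not_dom hb hzd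
    have hz'd : z' ∉ ptnDom a := not_dom_of_partner_inl hb hz'
    have hz'ne : z' ≠ z := fun h => partner_ne hb (Sum.inl z) (by rw [hz', h])
    refine ⟨z', hz', ?_, hz'd, hz'ne⟩
    by_contra hle
    push_neg at hle
    have hlt : x < z' := lt_of_le_of_ne hle (fun h => hz'd (h ▸ hx))
    exact ht.2 ⟨Sum.inl z, Sum.inl z', Sum.inl x, Sum.inr j,
      hz' ▸ partner_rel hb (Sum.inl z), hj, hzx, hlt,
      lt_of_lt_of_le (beta_inl_lt z') (beta_inr_ge j)⟩
  apply even_card_invol _ g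
  · intro z hz
    simp only [Finset.mem_filter, Finset.mem_univ, true_and] at hz ⊢
    obtain ⟨z', hz', h1, h2, _⟩ := key z hz.1 hz.2
    rw [hgz z z' hz']
    exact ⟨h1, h2⟩
  · intro z hz
    simp only [Finset.mem_filter, Finset.mem_univ, true_and] at hz
    obtain ⟨z', hz', _, _, _⟩ := key z hz.1 hz.2
    rw [hgz z z' hz', hgz z' z (by rw [← hz', partner_partner])]
  · intro z hz
    simp only [Finset.mem_filter, Finset.mem_univ, true_and] at hz
    obtain ⟨z', hz', _, _, h3⟩ := key z hz.1 hz.2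
    rw [hgz z z' hz']; exact h3

lemma even_card_non_dom (hb : IsBrauer a) :
    Even ((Finset.univ.filter (fun z : Fin m => z ∉ ptnDom a)).card) := by
  classical
  set g : Fin m → Fin m := fun z => Sum.elim id (fun _ => z) (partner hb (Sum.inl z)) with hg
  have hgz : ∀ (z z' : Fin m), partner hb (Sum.inl z) = Sum.inl z' → g z = z' := by
    intro z z' hp; simp [hg, hp]
  have key : ∀ z : Fin m, z ∉ ptnDom a →
      ∃ z', partner hb (Sum.inl z) = Sum.inl z' ∧ z' ∉ ptnDom a ∧ z' ≠ z := by
    intro z hzd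
    obtain ⟨z', hz'⟩ := partner_inl_of_not_dom hb hzd
    exact ⟨z', hz', not_dom_of_partner_inl hb hz',
      fun h => partner_ne hb (Sum.inl z) (by rw [hz', h])⟩
  apply even_card_invol _ g
  · intro z hz
    simp only [Finset.mem_filter, Finset.mem_univ, true_and] at hz ⊢
    obtain ⟨z', hz', h2, _⟩ := key z hz
    rw [hgz z z' hz']; exact h2
  · intro z hz
    simp only [Finset.mem_filter, Finset.mem_univ, true_and] at hz
    obtain ⟨z', hz', _, _⟩ := key z hz
    rw [hgz z z' hz', hgz z' z (by rw [← hz', partner_partner])]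
  · intro z hz
    simp only [Finset.mem_filter, Finset.mem_univ, true_and] at hz
    obtain ⟨z', hz', _, h3⟩ := key z hz
    rw [hgz z z' hz']; exact h3

lemma even_card_below_codom (ht : IsTL a) {y : Fin n} (hy : y ∈ ptnCodom a) :
    Even ((Finset.univ.filter (fun z : Fin n => z < y ∧ z ∉ ptnCodom a)).card) := by
  classical
  have hb := ht.1
  obtain ⟨i, hi⟩ := mem_codom.mp hy
  set g : Fin n → Fin n := fun z => Sum.elim (fun _ => z) id (partner hb (Sum.inr z)) with hg
  have hgz : ∀ (z z' : Fin n), partner hb (Sum.inr z) = Sum.inr z' → g z = z' := by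
    intro z z' hp; simp [hg, hp]
  have key : ∀ z : Fin n, z < y → z ∉ ptnCodom a →
      ∃ z', partner hb (Sum.inr z) = Sum.inr z' ∧ z' < y ∧ z' ∉ ptnCodom a ∧ z' ≠ z := by
    intro z hzy hzd
    obtain ⟨z', hz'⟩ := partner_inr_of_not_codom hb hzd
    have hz'd : z' ∉ ptnCodom a := not_codom_of_partner_inr hb hz'
    have hz'ne : z' ≠ z := fun h => partner_ne hb (Sum.inr z) (by rw [hz', h])
    refine ⟨z', hz', ?_, hz'd, hz'ne⟩
    by_contra hle
    push_neg at hle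
    have hlt : y < z' := lt_of_le_of_ne hle (fun h => hz'd (h ▸ hy))
    refine ht.2 ⟨Sum.inl i, Sum.inr y, Sum.inr z', Sum.inr z,
      hi, a.symm (hz' ▸ partner_rel hb (Sum.inr z)),
      lt_of_lt_of_le (beta_inl_lt i) (beta_inr_ge z'), ?_, ?_⟩
    · have h1 := z'.2
      have h2 : (y : ℕ) < (z' : ℕ) := hlt
      simp only [beta_inr]; omega
    · have h1 := y.2
      have h2 : (z : ℕ) < (y : ℕ) := hzy
      simp only [beta_inr]; omega
  apply even_card_invol _ g
  · intro z hz
    simp only [Finset.mem_filter, Finset.mem_univ, true_and] at hz ⊢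
    obtain ⟨z', hz', h1, h2, _⟩ := key z hz.1 hz.2
    rw [hgz z z' hz']
    exact ⟨h1, h2⟩
  · intro z hz
    simp only [Finset.mem_filter, Finset.mem_univ, true_and] at hz
    obtain ⟨z', hz', _, _, _⟩ := key z hz.1 hz.2
    rw [hgz z z' hz', hgz z' z (by rw [← hz', partner_partner])]
  · intro z hz
    simp only [Finset.mem_filter, Finset.mem_univ, true_and] at hz
    obtain ⟨z', hz', _, _, h3⟩ := key z hz.1 hz.2
    rw [hgz z z' hz']; exact h3

lemma dom_get_parity (ht : IsTL a) (k : ℕ) (h : k < ((ptnDom a).sort (· ≤ ·)).length) :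
    ((((ptnDom a).sort (· ≤ ·)).get ⟨k, h⟩ : ℕ) + 1) ≡ (k + 1) [MOD 2] := by
  classical
  set x := ((ptnDom a).sort (· ≤ ·)).get ⟨k, h⟩ with hxdef
  have hx : x ∈ ptnDom a := (Finset.mem_sort _).mp (List.get_mem _ _)
  have hA : ((ptnDom a).filter (fun y => y < x)).card = k := card_filter_lt_sort _ k h
  have hsplit : ((Finset.univ.filter (fun z : Fin m => z < x)).filter
        (fun z => z ∈ ptnDom a)).card
      + ((Finset.univ.filter (fun z : Fin m => z < x)).filter
        (fun z => z ∉ ptnDom a)).card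
      = (Finset.univ.filter (fun z : Fin m => z < x)).card :=
    Finset.card_filter_add_card_filter_not (fun z => z ∈ ptnDom a)
  have hA' : (Finset.univ.filter (fun z : Fin m => z < x)).filter (fun z => z ∈ ptnDom a)
      = (ptnDom a).filter (fun y => y < x) := by
    ext z
    simp only [Finset.mem_filter, Finset.mem_univ, true_and]
    tauto
  have hB' : (Finset.univ.filter (fun z : Fin m => z < x)).filter (fun z => z ∉ ptnDom a)
      = Finset.univ.filter (fun z : Fin m => z < x ∧ z ∉ ptnDom a) := by
    ext z
    simp only [Finset.mem_filter, Finset.mem_univ, true_and]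
  have hBev := even_card_below_dom ht hx
  have hxv := card_filter_lt_fin x
  rw [hA', hB', hA, hxv] at hsplit
  rw [Nat.even_iff] at hBev
  show ((x : ℕ) + 1) % 2 = (k + 1) % 2
  omega

lemma codom_get_parity (ht : IsTL a) (k : ℕ) (h : k < ((ptnCodom a).sort (· ≤ ·)).length) :
    ((((ptnCodom a).sort (· ≤ ·)).get ⟨k, h⟩ : ℕ) + 1) ≡ (k + 1) [MOD 2] := by
  classical
  set y := ((ptnCodom a).sort (· ≤ ·)).get ⟨k, h⟩ with hydef
  have hy : y ∈ ptnCodom a := (Finset.mem_sort _).mp (List.get_mem _ _)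
  have hA : ((ptnCodom a).filter (fun z => z < y)).card = k := card_filter_lt_sort _ k h
  have hsplit : ((Finset.univ.filter (fun z : Fin n => z < y)).filter
        (fun z => z ∈ ptnCodom a)).card
      + ((Finset.univ.filter (fun z : Fin n => z < y)).filter
        (fun z => z ∉ ptnCodom a)).card
      = (Finset.univ.filter (fun z : Fin n => z < y)).card :=
    Finset.card_filter_add_card_filter_not (fun z => z ∈ ptnCodom a)
  have hA' : (Finset.univ.filter (fun z : Fin n => z < y)).filter (fun z => z ∈ ptnCodom a)
      = (ptnCodom a).filter (fun z => z < y) := by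
    ext z
    simp only [Finset.mem_filter, Finset.mem_univ, true_and]
    tauto
  have hB' : (Finset.univ.filter (fun z : Fin n => z < y)).filter (fun z => z ∉ ptnCodom a)
      = Finset.univ.filter (fun z : Fin n => z < y ∧ z ∉ ptnCodom a) := by
    ext z
    simp only [Finset.mem_filter, Finset.mem_univ, true_and]
  have hBev := even_card_below_codom ht hy
  have hyv := card_filter_lt_fin y
  rw [hA', hB', hA, hyv] at hsplit
  rw [Nat.even_iff] at hBev
  show ((y : ℕ) + 1) % 2 = (k + 1) % 2
  omega

end EvenCounts

/-- parity properties of Temperley–Lieb partitions. -/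
theorem tl_parity {m n : ℕ} (a : Ptn m n) (ha : IsTL a) :
    (∀ i j : Fin m, i ≠ j → a.r (Sum.inl i) (Sum.inl j) →
      ¬ ((i : ℕ) ≡ (j : ℕ) [MOD 2])) ∧
    (∀ i j : Fin n, i ≠ j → a.r (Sum.inr i) (Sum.inr j) →
      ¬ ((i : ℕ) ≡ (j : ℕ) [MOD 2])) ∧
    (∀ (i : Fin m) (j : Fin n), a.r (Sum.inl i) (Sum.inr j) →
      (i : ℕ) ≡ (j : ℕ) [MOD 2]) ∧
    (ptnRank a ≡ m [MOD 2] ∧ m ≡ n [MOD 2]) ∧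
    (∀ (k : ℕ) (h : k < ((ptnDom a).sort (· ≤ ·)).length),
      ((((ptnDom a).sort (· ≤ ·)).get ⟨k, h⟩ : ℕ) + 1) ≡ (k + 1) [MOD 2]) ∧
    (∀ (k : ℕ) (h : k < ((ptnCodom a).sort (· ≤ ·)).length),
      ((((ptnCodom a).sort (· ≤ ·)).get ⟨k, h⟩ : ℕ) + 1) ≡ (k + 1) [MOD 2]) := by
  classical
  have hb := ha.1
  have hmn : Even (m + n) := even_add_mn hb
  rw [Nat.even_iff] at hmn
  refine ⟨?_, ?_, ?_, ⟨?_, ?_⟩, dom_get_parity ha, codom_get_parity ha⟩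
  · intro i j hij hrel hmod
    exact beta_parity ha hrel (fun h => hij (Sum.inl_injective h)) hmod
  · intro i j hij hrel hmod
    have h1 : ¬ ((m + n - 1 - (i : ℕ)) % 2 = (m + n - 1 - (j : ℕ)) % 2) :=
      beta_parity ha hrel (fun h => hij (Sum.inr_injective h))
    have h2 : (i : ℕ) % 2 = (j : ℕ) % 2 := hmod
    have h3 := i.2
    have h4 := j.2
    omega
  · intro i j hrel
    have h1 : ¬ (((i : ℕ)) % 2 = (m + n - 1 - (j : ℕ)) % 2) :=
      beta_parity ha hrel (fun h => absurd h (by simp))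
    have h4 := j.2
    show (i : ℕ) % 2 = (j : ℕ) % 2
    omega
  · -- rank ≡ m
    rw [rank_eq_card_dom hb]
    have hsplit : ((Finset.univ : Finset (Fin m)).filter (fun z => z ∈ ptnDom a)).card
        + ((Finset.univ : Finset (Fin m)).filter (fun z => z ∉ ptnDom a)).card
        = (Finset.univ : Finset (Fin m)).card :=
      Finset.card_filter_add_card_filter_not (fun z => z ∈ ptnDom a)
    have hfd : (Finset.univ : Finset (Fin m)).filter (fun z => z ∈ ptnDom a) = ptnDom a := by
      ext z; simp
    have hev := even_card_non_dom hb
    rw [Nat.even_iff] at hev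
    rw [hfd, Finset.card_univ, Fintype.card_fin] at hsplit
    show (ptnDom a).card % 2 = m % 2
    omega
  · show m % 2 = n % 2
    omega
end

section
/- For every n : ℕ, the number of even-gap subsets of Fin n equals Nat.fib (n + 1); that is, the cardinality of {X : Finset (Fin n) // X is an even-gap subset} is the Fibonacci number f_n, where f_0 = f_1 = 1 and f_n = f_{n-1} + f_{n-2}. -/
open Classical

-- L1: sort of map under castLE
lemma sort_map_castLE {n m : ℕ} (h : n ≤ m) (s : Finset (Fin n)) :
    (s.map (Fin.castLEEmb h)).sort (· ≤ ·) = (s.sort (· ≤ ·)).map (Fin.castLE h) := by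
  refine (fun hp h1 h2 => List.Perm.eq_of_pairwise' (r := (· ≤ ·)) h1 h2 hp) ?_ ?_ ?_
  · rw [← Multiset.coe_eq_coe]
    change ((s.map (Fin.castLEEmb h)).sort (· ≤ ·) : Multiset (Fin m)) = _
    rw [Finset.sort_eq, Finset.map_val]
    rw [show ((((s.sort (· ≤ ·)).map (Fin.castLE h)) : List (Fin m)) : Multiset (Fin m))
        = Multiset.map (Fin.castLE h) ((s.sort (· ≤ ·) : List (Fin n)) : Multiset (Fin n))
        from rfl]
    rw [Finset.sort_eq]
    rfl
  · exact Finset.pairwise_sort _ _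
  · exact List.Pairwise.map _ (fun a b hab => by simpa using hab) (Finset.pairwise_sort s _)

-- L2: sort of insert max
lemma sort_insert_max {n : ℕ} {a : Fin n} {s : Finset (Fin n)}
    (h : ∀ b ∈ s, b ≤ a) (ha : a ∉ s) :
    (insert a s).sort (· ≤ ·) = s.sort (· ≤ ·) ++ [a] := by
  refine (fun hp h1 h2 => List.Perm.eq_of_pairwise' (r := (· ≤ ·)) h1 h2 hp) ?_ ?_ ?_
  · rw [← Multiset.coe_eq_coe]
    change ((insert a s).sort (· ≤ ·) : Multiset (Fin n)) = _
    rw [Finset.sort_eq, Finset.insert_val_of_notMem ha]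
    rw [show ((s.sort (· ≤ ·) ++ [a] : List (Fin n)) : Multiset (Fin n))
        = (s.sort (· ≤ ·) : Multiset (Fin n)) + {a} from rfl]
    rw [Finset.sort_eq]
    rw [add_comm]
    rfl
  · exact Finset.pairwise_sort _ _
  · rw [List.pairwise_append]
    exact ⟨Finset.pairwise_sort _ _, List.pairwise_singleton _ _,
      fun x hx y hy => by simp at hy; subst hy; exact h x ((Finset.mem_sort _).mp hx)⟩

lemma eg_map {n m : ℕ} (h : n ≤ m) (hm : m % 2 = n % 2) (Y : Finset (Fin n)) :
    IsEvenGap (Y.map (Fin.castLEEmb h)) ↔ IsEvenGap Y := by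
  unfold IsEvenGap
  simp only [sort_map_castLE, Finset.card_map, List.get_eq_getElem, List.getElem_map,
    List.length_map, Fin.coe_castLE, Nat.ModEq]
  rw [hm]

lemma last_not_mem_map {n : ℕ} (Y : Finset (Fin (n+1))) :
    Fin.last (n+1) ∉ Y.map (Fin.castLEEmb (Nat.le_succ (n+1))) := by
  simp only [Finset.mem_map, not_exists]
  rintro j ⟨-, hj⟩
  have := congrArg Fin.val hj
  simp [Fin.castLEEmb, Fin.last] at this
  omega

lemma sort_up1 {n : ℕ} (Y : Finset (Fin (n+1))) :
    (insert (Fin.last (n+1)) (Y.map (Fin.castLEEmb (Nat.le_succ (n+1))))).sort (· ≤ ·)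
      = (Y.sort (· ≤ ·)).map (Fin.castLE (Nat.le_succ (n+1))) ++ [Fin.last (n+1)] := by
  rw [sort_insert_max (fun b _ => Fin.le_last b) (last_not_mem_map Y), sort_map_castLE]

lemma eg_up1 {n : ℕ} (Y : Finset (Fin (n+1))) :
    IsEvenGap (insert (Fin.last (n+1)) (Y.map (Fin.castLEEmb (Nat.le_succ (n+1)))))
      ↔ IsEvenGap Y := by
  have hcard : (insert (Fin.last (n+1)) (Y.map (Fin.castLEEmb (Nat.le_succ (n+1))))).card
      = Y.card + 1 := by
    rw [Finset.card_insert_of_notMem (last_not_mem_map Y), Finset.card_map]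
  unfold IsEvenGap
  simp only [sort_up1, hcard, List.get_eq_getElem, List.length_append, List.length_map,
    List.length_singleton, Finset.length_sort, Nat.ModEq]
  constructor
  · rintro ⟨h1, h2⟩
    refine ⟨by omega, fun k hk => ?_⟩
    have := h2 k (by omega)
    rwa [List.getElem_append_left (by simpa using hk), List.getElem_map, Fin.coe_castLE] at this
  · rintro ⟨h1, h2⟩
    refine ⟨by omega, fun k hk => ?_⟩
    rcases lt_or_eq_of_le (Nat.lt_succ_iff.mp hk) with hk' | hk'
    · rw [List.getElem_append_left (by simpa using hk'), List.getElem_map, Fin.coe_castLE]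
      exact h2 k hk'
    · subst hk'
      rw [List.getElem_append_right (by simp)]
      simp only [List.length_map, Finset.length_sort, Nat.sub_self, List.getElem_singleton]
      simp only [Fin.val_last]
      omega

lemma not_mem_penult {n : ℕ} (X : Finset (Fin (n+2))) (hX : IsEvenGap X)
    (hlast : Fin.last (n+1) ∉ X) : (⟨n, by omega⟩ : Fin (n+2)) ∉ X := by
  intro hm
  have hne : X.Nonempty := ⟨_, hm⟩
  have hmax : X.max' hne = ⟨n, by omega⟩ := by
    apply le_antisymm
    · apply Finset.max'_le
      intro b hb
      have hb1 : (b : ℕ) < n + 2 := b.isLt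
      have hb2 : (b : ℕ) ≠ n + 1 := by
        intro hbe
        exact hlast (by rwa [show b = Fin.last (n+1) from Fin.ext hbe] at hb)
      exact Fin.le_def.mpr (show (b : ℕ) ≤ n by omega)
    · exact Finset.le_max' _ _ hm
  have hlen : (X.sort (· ≤ ·)).length - 1 < (X.sort (· ≤ ·)).length := by
    have : (X.sort (· ≤ ·)).length = X.card := Finset.length_sort _
    have := Finset.card_pos.mpr hne
    omega
  have h2 := hX.2 ((X.sort (· ≤ ·)).length - 1) hlen
  rw [List.get_eq_getElem, Finset.sorted_last_eq_max', hmax] at h2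
  have h1 := hX.1
  have hcpos : 0 < X.card := Finset.card_pos.mpr hne
  rw [Finset.length_sort] at h2
  simp only [Nat.ModEq] at h1 h2
  omega

def down1 {n : ℕ} (X : Finset (Fin (n+2))) : Finset (Fin (n+1)) :=
  Finset.univ.filter fun i => Fin.castLE (Nat.le_succ (n+1)) i ∈ X

def down2 {n : ℕ} (X : Finset (Fin (n+2))) : Finset (Fin n) :=
  Finset.univ.filter fun i => Fin.castLE (by omega) i ∈ X

lemma decomp1 {n : ℕ} {X : Finset (Fin (n+2))} (h : Fin.last (n+1) ∈ X) :
    insert (Fin.last (n+1)) ((down1 X).map (Fin.castLEEmb (Nat.le_succ (n+1)))) = X := by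
  ext b
  simp only [Finset.mem_insert, Finset.mem_map, down1, Finset.mem_filter, Finset.mem_univ,
    true_and, Fin.coe_castLEEmb]
  constructor
  · rintro (rfl | ⟨i, hi, rfl⟩) <;> assumption
  · intro hb
    by_cases hbl : b = Fin.last (n+1)
    · exact Or.inl hbl
    · refine Or.inr ⟨⟨(b : ℕ), ?_⟩, ?_, ?_⟩
      · have := b.isLt
        have : (b : ℕ) ≠ n + 1 := fun he => hbl (Fin.ext he)
        omega
      · convert hb using 2; exact Fin.ext rfl
      · exact Fin.ext rfl

lemma down1_up1 {n : ℕ} (Y : Finset (Fin (n+1))) :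
    down1 (insert (Fin.last (n+1)) (Y.map (Fin.castLEEmb (Nat.le_succ (n+1))))) = Y := by
  ext i
  simp only [down1, Finset.mem_filter, Finset.mem_univ, true_and, Finset.mem_insert,
    Finset.mem_map, Fin.coe_castLEEmb]
  constructor
  · rintro (him | ⟨j, hj, hji⟩)
    · exfalso
      have := congrArg Fin.val him
      simp [Fin.val_last] at this
      omega
    · have : j = i := Fin.ext (by simpa using congrArg Fin.val hji)
      rwa [← this]
  · intro hi
    exact Or.inr ⟨i, hi, rfl⟩

lemma decomp2 {n : ℕ} {X : Finset (Fin (n+2))} (hX : IsEvenGap X)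
    (h : Fin.last (n+1) ∉ X) :
    (down2 X).map (Fin.castLEEmb (by omega)) = X := by
  have hpen := not_mem_penult X hX h
  ext b
  simp only [Finset.mem_map, down2, Finset.mem_filter, Finset.mem_univ, true_and,
    Fin.coe_castLEEmb]
  constructor
  · rintro ⟨i, hi, rfl⟩; exact hi
  · intro hb
    refine ⟨⟨(b : ℕ), ?_⟩, ?_, Fin.ext rfl⟩
    · have := b.isLt
      have h1 : (b : ℕ) ≠ n + 1 := fun he => h (by rwa [show b = Fin.last (n+1) from Fin.ext he] at hb)
      have h2 : (b : ℕ) ≠ n := fun he => hpen (by rwa [show b = (⟨n, by omega⟩ : Fin (n+2)) from Fin.ext he] at hb)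
      omega
    · convert hb using 2; exact Fin.ext rfl

lemma down2_up2 {n : ℕ} (Y : Finset (Fin n)) :
    down2 (Y.map (Fin.castLEEmb (by omega : n ≤ n + 2))) = Y := by
  ext i
  simp only [down2, Finset.mem_filter, Finset.mem_univ, true_and, Finset.mem_map,
    Fin.coe_castLEEmb]
  constructor
  · rintro ⟨j, hj, hji⟩
    have : j = i := Fin.ext (by simpa using congrArg Fin.val hji)
    rwa [← this]
  · intro hi
    exact ⟨i, hi, rfl⟩

lemma last_not_mem_map2 {n : ℕ} (Y : Finset (Fin n)) :
    Fin.last (n+1) ∉ Y.map (Fin.castLEEmb (by omega : n ≤ n + 2)) := by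
  simp only [Finset.mem_map, not_exists]
  rintro j ⟨-, hj⟩
  have := congrArg Fin.val hj
  simp [Fin.last] at this
  have := j.isLt
  omega

noncomputable def egEquiv (n : ℕ) : {X : Finset (Fin (n+2)) // IsEvenGap X} ≃
    ({X : Finset (Fin (n+1)) // IsEvenGap X} ⊕ {X : Finset (Fin n) // IsEvenGap X}) where
  toFun X := if h : Fin.last (n+1) ∈ X.1
    then Sum.inl ⟨down1 X.1, by
      rw [← eg_up1, decomp1 h]; exact X.2⟩
    else Sum.inr ⟨down2 X.1, by
      rw [← eg_map (by omega : n ≤ n + 2) (by omega), decomp2 X.2 h]; exact X.2⟩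
  invFun := Sum.elim
    (fun Y => ⟨insert (Fin.last (n+1)) (Y.1.map (Fin.castLEEmb (Nat.le_succ (n+1)))),
      (eg_up1 Y.1).mpr Y.2⟩)
    (fun Y => ⟨Y.1.map (Fin.castLEEmb (by omega : n ≤ n + 2)),
      (eg_map (by omega) (by omega) Y.1).mpr Y.2⟩)
  left_inv X := by
    by_cases h : Fin.last (n+1) ∈ X.1
    · simp only [dif_pos h, Sum.elim_inl]
      exact Subtype.ext (decomp1 h)
    · simp only [dif_neg h, Sum.elim_inr]
      exact Subtype.ext (decomp2 X.2 h)
  right_inv Y := by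
    cases Y with
    | inl Y =>
      simp only [Sum.elim_inl]
      simp only [Finset.mem_insert_self, ↓reduceDIte]
      exact congrArg Sum.inl (Subtype.ext (down1_up1 Y.1))
    | inr Y =>
      simp only [Sum.elim_inr]
      simp only [last_not_mem_map2, ↓reduceDIte]
      exact congrArg Sum.inr (Subtype.ext (down2_up2 Y.1))

lemma eg_rec (n : ℕ) :
    Nat.card {X : Finset (Fin (n+2)) // IsEvenGap X}
      = Nat.card {X : Finset (Fin (n+1)) // IsEvenGap X}
        + Nat.card {X : Finset (Fin n) // IsEvenGap X} := by
  rw [Nat.card_congr (egEquiv n), Nat.card_sum]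

lemma eg_zero : Nat.card {X : Finset (Fin 0) // IsEvenGap X} = 1 := by
  rw [Nat.card_eq_one_iff_unique]
  constructor
  · exact ⟨fun a b => Subtype.ext (by
      rw [Finset.eq_empty_of_forall_notMem (s := a.1) (fun x _ => Fin.elim0 x),
        Finset.eq_empty_of_forall_notMem (s := b.1) (fun x _ => Fin.elim0 x)])⟩
  · refine ⟨⟨∅, ⟨by simp [Nat.ModEq], fun k h => ?_⟩⟩⟩
    simp [Finset.sort_empty] at h

lemma eg_one : Nat.card {X : Finset (Fin 1) // IsEvenGap X} = 1 := by
  rw [Nat.card_eq_one_iff_unique]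
  have key : ∀ X : Finset (Fin 1), IsEvenGap X → X = {0} := by
    intro X hX
    have h1 : X.card ≤ 1 := by
      have := Finset.card_le_univ X
      simpa using this
    have h2 : X.card % 2 = 1 % 2 := hX.1
    have h3 : X.card = 1 := by omega
    obtain ⟨a, ha⟩ := Finset.card_eq_one.mp h3
    rw [ha, Subsingleton.elim a 0]
  constructor
  · exact ⟨fun a b => Subtype.ext (by rw [key a.1 a.2, key b.1 b.2])⟩
  · refine ⟨⟨{0}, ⟨rfl, fun k h => ?_⟩⟩⟩
    have hk : k = 0 := by
      rw [Finset.sort_singleton] at h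
      simpa using h
    subst hk
    simp [Finset.sort_singleton]
    rfl

theorem card_evenGap_aux (n : ℕ) :
    Nat.card {X : Finset (Fin n) // IsEvenGap X} = Nat.fib (n + 1) := by
  induction n using Nat.twoStepInduction with
  | zero => simpa using eg_zero
  | one => simpa using eg_one
  | more n ih1 ih2 =>
    rw [eg_rec n, ih1, ih2, show n + 2 + 1 = (n + 1) + 2 from rfl,
      Nat.fib_add_two (n := n + 1)]
    exact Nat.add_comm _ _


/-- the number of even-gap subsets of `Fin n` is the Fibonacci number
`f_n = Nat.fib (n+1)`. -/
theorem card_evenGap (n : ℕ) :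
    Nat.card {X : Finset (Fin n) // IsEvenGap X} = Nat.fib (n + 1) :=
  card_evenGap_aux n
end
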